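/- Upper bound for tripartite entanglement of purification: Δ_P(A:B:C) ≤ S_A + S_B + S_{AB} for any tripartite state ρ_{ABC}; hence Δ_P(A:B:C) ≤ min{S_A + S_B + S_{AB}, S_B + S_C + S_{BC}, S_C + S_A + S_{CA}}. -/

import Mathlib

open scoped BigOperators ComplexOrder

noncomputable section

/-- Von Neumann entropy of a matrix: `−∑ λᵢ log λᵢ` over its eigenvalues
(defined to be `0` if the matrix is not Hermitian). -/
noncomputable def matEntropy {ι : Type} [Fintype ι] [DecidableEq ι]
    (ρ : Matrix ι ι ℂ) : ℝ :=
  if h : ρ.IsHermitian then ∑ i, Real.negMulLog (h.eigenvalues i) else 0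

/-- A density matrix: positive semidefinite with unit trace. -/
def IsDensityMatrix {ι : Type} [Fintype ι] (ρ : Matrix ι ι ℂ) : Prop :=
  ρ.PosSemidef ∧ ρ.trace = 1

instance sumElimFintype {κ π : Type} {α : κ → Type} {δ : π → Type}
    [∀ i, Fintype (α i)] [∀ k, Fintype (δ k)] :
    ∀ i : κ ⊕ π, Fintype (Sum.elim α δ i)
  | .inl a => inferInstanceAs (Fintype (α a))
  | .inr b => inferInstanceAs (Fintype (δ b))

instance sumElimDecEq {κ π : Type} {α : κ → Type} {δ : π → Type}
    [∀ i, DecidableEq (α i)] [∀ k, DecidableEq (δ k)] :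
    ∀ i : κ ⊕ π, DecidableEq (Sum.elim α δ i)
  | .inl a => inferInstanceAs (DecidableEq (α a))
  | .inr b => inferInstanceAs (DecidableEq (δ b))

/-- Reduced density matrix on the subsystems in `s` (partial trace over the rest). -/
noncomputable def reduce {κ : Type} [Fintype κ] [DecidableEq κ] {α : κ → Type}
    [∀ i, Fintype (α i)] (s : Finset κ)
    (ρ : Matrix (∀ i, α i) (∀ i, α i) ℂ) :
    Matrix (∀ i : {j // j ∈ s}, α i.1) (∀ i : {j // j ∈ s}, α i.1) ℂ :=
  Matrix.of fun f g => ∑ h : ∀ i : {j // j ∉ s}, α i.1,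
    ρ (fun i => if hi : i ∈ s then f ⟨i, hi⟩ else h ⟨i, hi⟩)
      (fun i => if hi : i ∈ s then g ⟨i, hi⟩ else h ⟨i, hi⟩)

/-- The (pure) density matrix `|ψ⟩⟨ψ|` of a state vector. -/
def vecState {ι : Type} (ψ : ι → ℂ) : Matrix ι ι ℂ :=
  Matrix.of fun x y => ψ x * star (ψ y)

/-- Multipartite mutual information `∑ᵢ S_{Aᵢ} − S_{A₁⋯Aₙ}`. -/
noncomputable def Imulti {κ : Type} [Fintype κ] [DecidableEq κ] {α : κ → Type}
    [∀ i, Fintype (α i)] [∀ i, DecidableEq (α i)]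
    (ρ : Matrix (∀ i, α i) (∀ i, α i) ℂ) : ℝ :=
  (∑ i, matEntropy (reduce {i} ρ)) - matEntropy ρ

/-- Merge an assignment on the original systems with one on the ancillas. -/
def mergeSum {κ π : Type} {α : κ → Type} {δ : π → Type}
    (f : ∀ i, α i) (h : ∀ k, δ k) : ∀ i : κ ⊕ π, Sum.elim α δ i
  | .inl a => f a
  | .inr b => h b

/-- The subsystems belonging to party `k` together with its ancilla. -/
def partyFinset {κ π : Type} [Fintype κ] [DecidableEq κ] [DecidableEq π]
    (p : κ → π) (k : π) : Finset (κ ⊕ π) :=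
  (Finset.univ.filter fun i => p i = k).image Sum.inl ∪ {Sum.inr k}

/-- `ψ` (on the original systems plus one ancilla `Fin (d k)` per party)
purifies `ρ`: tracing out all ancillas from `|ψ⟩⟨ψ|` gives back `ρ`. -/
def Purifies {κ π : Type} [Fintype κ] {α : κ → Type} [∀ i, Fintype (α i)]
    [Fintype π] [DecidableEq π] {d : π → ℕ}
    (ψ : (∀ i : κ ⊕ π, Sum.elim α (fun k => Fin (d k)) i) → ℂ)
    (ρ : Matrix (∀ i, α i) (∀ i, α i) ℂ) : Prop :=
  ∀ f g, (∑ h : ∀ k, Fin (d k), vecState ψ (mergeSum f h) (mergeSum g h)) = ρ f g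

/-- Multipartite entanglement of purification for the partition of the systems `κ`
into parties `π` given by `p`: the infimum over all purifications (with one ancilla
per party, of arbitrary finite dimension) of `∑ₖ S_{AₖAₖ'}`. -/
noncomputable def DeltaPart {κ π : Type} [Fintype κ] [DecidableEq κ]
    [Fintype π] [DecidableEq π] {α : κ → Type}
    [∀ i, Fintype (α i)] [∀ i, DecidableEq (α i)]
    (p : κ → π) (ρ : Matrix (∀ i, α i) (∀ i, α i) ℂ) : ℝ :=
  sInf { x | ∃ (d : π → ℕ) (ψ : (∀ i : κ ⊕ π, Sum.elim α (fun k => Fin (d k)) i) → ℂ),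
    Purifies ψ ρ ∧
    x = ∑ k : π, matEntropy (reduce (partyFinset p k) (vecState ψ)) }

/-- Bipartite-style entanglement of purification for the partition `p`:
the infimum over purifications of the entropy of the single party `k₀`
together with its ancilla. -/
noncomputable def EPart {κ π : Type} [Fintype κ] [DecidableEq κ]
    [Fintype π] [DecidableEq π] {α : κ → Type}
    [∀ i, Fintype (α i)] [∀ i, DecidableEq (α i)]
    (p : κ → π) (k₀ : π) (ρ : Matrix (∀ i, α i) (∀ i, α i) ℂ) : ℝ :=
  sInf { x | ∃ (d : π → ℕ) (ψ : (∀ i : κ ⊕ π, Sum.elim α (fun k => Fin (d k)) i) → ℂ),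
    Purifies ψ ρ ∧
    x = matEntropy (reduce (partyFinset p k₀) (vecState ψ)) }

/-!
Write `ρ = W Wᴴ` with `W` having one column per basis state (for instance `W = √ρ`) and purify
`ρ` by `ψ(x, a) = W(x, a_{k₀})`: the column index of `W` is stored in the ancilla of one party
`k₀`, and every other party gets a one-dimensional ancilla. A party `k ≠ k₀` then holds exactly
the marginal of `ρ` on its systems. The party `k₀` holds one half of the pure state `ψ`, so its
entropy equals that of the other half, which is the marginal of `ρ` on the systems outside `k₀`.
For the parties `A | B | C` with `k₀ = C` this gives `S_A + S_B + S_{AB}`; `k₀ = A` and `k₀ = B`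
give the other two bounds.
-/

open Polynomial Matrix
open scoped MatrixOrder

section Entropy

variable {m n : Type} [Fintype m] [Fintype n] [DecidableEq m] [DecidableEq n]

lemma matEntropy_eq_sum_roots_X_pow_mul {A : Matrix n n ℂ} (hA : A.IsHermitian) (a : ℕ) :
    matEntropy A = ((X ^ a * A.charpoly).roots.map fun z : ℂ => Real.negMulLog z.re).sum := by
  rw [roots_mul (mul_ne_zero (pow_ne_zero _ X_ne_zero) A.charpoly_monic.ne_zero), roots_X_pow,
    hA.roots_charpoly_eq_eigenvalues, matEntropy, dif_pos hA]
  simp [Multiset.map_nsmul, Multiset.sum_nsmul]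

lemma matEntropy_eq_of_X_pow_mul_charpoly_eq {A : Matrix n n ℂ} {B : Matrix m m ℂ}
    (hA : A.IsHermitian) (hB : B.IsHermitian) {a b : ℕ}
    (h : X ^ a * A.charpoly = X ^ b * B.charpoly) : matEntropy A = matEntropy B := by
  rw [matEntropy_eq_sum_roots_X_pow_mul hA a, matEntropy_eq_sum_roots_X_pow_mul hB b, h]

lemma matEntropy_mul_conjTranspose_comm (M : Matrix m n ℂ) :
    matEntropy (M * Mᴴ) = matEntropy (Mᴴ * M) :=
  matEntropy_eq_of_X_pow_mul_charpoly_eq (isHermitian_mul_conjTranspose_self M)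
    (isHermitian_conjTranspose_mul_self M) (charpoly_mul_comm' M Mᴴ)

lemma matEntropy_reindex (e : m ≃ n) (A : Matrix m m ℂ) :
    matEntropy (reindex e e A) = matEntropy A := by
  by_cases hA : A.IsHermitian
  · have hA' : (reindex e e A).IsHermitian := (isHermitian_submatrix_equiv e.symm).mpr hA
    exact matEntropy_eq_of_X_pow_mul_charpoly_eq (a := 0) (b := 0) hA' hA
      (by rw [charpoly_reindex])
  · have hA' : ¬(reindex e e A).IsHermitian := mt (isHermitian_submatrix_equiv e.symm).mp hA
    rw [matEntropy, matEntropy, dif_neg hA, dif_neg hA']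

lemma matEntropy_transpose {A : Matrix n n ℂ} (hA : A.IsHermitian) :
    matEntropy Aᵀ = matEntropy A :=
  matEntropy_eq_of_X_pow_mul_charpoly_eq (a := 0) (b := 0) hA.transpose hA
    (by rw [charpoly_transpose])

lemma matEntropy_transpose_mul_conjTranspose (M : Matrix m n ℂ) :
    matEntropy (Mᵀ * Mᵀᴴ) = matEntropy (M * Mᴴ) := by
  rw [transpose_conjTranspose, ← conjTranspose_transpose, ← transpose_mul, matEntropy_transpose
    (isHermitian_conjTranspose_mul_self M), matEntropy_mul_conjTranspose_comm]

lemma matEntropy_nonneg {A : Matrix n n ℂ} (hA : A.PosSemidef) (htr : A.trace = 1) :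
    0 ≤ matEntropy A := by
  have hsum : ∑ i, hA.1.eigenvalues i = 1 := by
    simpa using congrArg Complex.re (hA.1.trace_eq_sum_eigenvalues.symm.trans htr)
  rw [matEntropy, dif_pos hA.1]
  refine Finset.sum_nonneg fun i _ => Real.negMulLog_nonneg (hA.eigenvalues_nonneg i) ?_
  exact hsum ▸ Finset.single_le_sum (fun j _ => hA.eigenvalues_nonneg j) (Finset.mem_univ i)

end Entropy

lemma matEntropy_submatrix_mul_conjTranspose {l m o n : Type}
    [Fintype l] [Fintype m] [Fintype o] [Fintype n] [DecidableEq l] [DecidableEq m]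
    (M : Matrix m n ℂ) (e₁ : l ≃ m) (e₂ : o ≃ n) :
    matEntropy (M.submatrix e₁ e₂ * (M.submatrix e₁ e₂)ᴴ) = matEntropy (M * Mᴴ) := by
  rw [conjTranspose_submatrix, submatrix_mul_equiv, ← matEntropy_reindex e₁.symm (M * Mᴴ)]
  rfl

section Reduce

variable {ι : Type} [Fintype ι] [DecidableEq ι] {β : ι → Type} [∀ i, Fintype (β i)]

def piSubtypeCongr {p q : ι → Prop} (h : ∀ i, p i ↔ q i) :
    (∀ i : {i // p i}, β i) ≃ (∀ i : {i // q i}, β i) where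
  toFun f i := f ⟨i, (h i).2 i.2⟩
  invFun f i := f ⟨i, (h i).1 i.2⟩
  left_inv _ := rfl
  right_inv _ := rfl

lemma reduce_apply (s : Finset ι) (σ : Matrix (∀ i, β i) (∀ i, β i) ℂ)
    (f g : ∀ i : {j // j ∈ s}, β i) :
    reduce s σ f g = ∑ h : ∀ i : {j // j ∉ s}, β i,
      σ ((Equiv.piEquivPiSubtypeProd (· ∈ s) β).symm (f, h))
        ((Equiv.piEquivPiSubtypeProd (· ∈ s) β).symm (g, h)) := rfl

lemma trace_reduce (s : Finset ι) (σ : Matrix (∀ i, β i) (∀ i, β i) ℂ) :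
    (reduce s σ).trace = σ.trace := by
  rw [trace, trace, ← (Equiv.piEquivPiSubtypeProd (· ∈ s) β).symm.sum_comp,
    Fintype.sum_prod_type]
  rfl

def coeffMatrix (s : Finset ι) (ψ : (∀ i, β i) → ℂ) :
    Matrix (∀ i : {j // j ∈ s}, β i) (∀ i : {j // j ∉ s}, β i) ℂ :=
  of fun f h => ψ ((Equiv.piEquivPiSubtypeProd (· ∈ s) β).symm (f, h))

lemma reduce_vecState (s : Finset ι) (ψ : (∀ i, β i) → ℂ) :
    reduce s (vecState ψ) = coeffMatrix s ψ * (coeffMatrix s ψ)ᴴ := by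
  ext f g
  rfl

lemma reduce_mul_conjTranspose {n : Type} [Fintype n] (s : Finset ι)
    (W : Matrix (∀ i, β i) n ℂ) :
    reduce s (W * Wᴴ) =
      (of fun f (hj : (∀ i : {j // j ∉ s}, β i) × n) =>
          W ((Equiv.piEquivPiSubtypeProd (· ∈ s) β).symm (f, hj.1)) hj.2) *
        (of fun f (hj : (∀ i : {j // j ∉ s}, β i) × n) =>
          W ((Equiv.piEquivPiSubtypeProd (· ∈ s) β).symm (f, hj.1)) hj.2)ᴴ := by
  ext f g
  rw [reduce_apply, mul_apply, Fintype.sum_prod_type]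
  rfl

variable [∀ i, DecidableEq (β i)]

lemma matEntropy_reduce_compl_vecState (s : Finset ι) (ψ : (∀ i, β i) → ℂ) :
    matEntropy (reduce sᶜ (vecState ψ)) = matEntropy (reduce s (vecState ψ)) := by
  have hcoeff : coeffMatrix sᶜ ψ = (coeffMatrix s ψ)ᵀ.submatrix
      (piSubtypeCongr fun _ => Finset.mem_compl)
      (piSubtypeCongr fun _ => Finset.notMem_compl) := by
    ext f h
    simp only [coeffMatrix, of_apply, submatrix_apply, transpose_apply]
    congr 1
    funext i
    by_cases hi : i ∈ s <;> simp [Equiv.piEquivPiSubtypeProd, piSubtypeCongr, hi]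
  rw [reduce_vecState, reduce_vecState, hcoeff, matEntropy_submatrix_mul_conjTranspose,
    matEntropy_transpose_mul_conjTranspose]

lemma matEntropy_reduce_vecState_nonneg (s : Finset ι) {ψ : (∀ i, β i) → ℂ}
    (hψ : (vecState ψ).trace = 1) : 0 ≤ matEntropy (reduce s (vecState ψ)) := by
  refine matEntropy_nonneg ?_ (by rw [trace_reduce, hψ])
  rw [reduce_vecState]
  exact posSemidef_self_mul_conjTranspose _

end Reduce

def piFinEquivOfEqOne {ι : Type} [DecidableEq ι] {d : ι → ℕ} (i₀ : ι)
    (hd : ∀ i ≠ i₀, d i = 1) : (∀ i, Fin (d i)) ≃ Fin (d i₀) :=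
  (Equiv.piSplitAt i₀ _).trans <|
    (Equiv.prodCongrRight fun _ =>
      Equiv.piCongrRight fun i : {i // i ≠ i₀} => finCongr (hd i i.2)).trans (Equiv.prodUnique _ _)

section SumPi

variable {κ π : Type} {α : κ → Type}

def piSubtypeSumEquiv {δ : π → Type} (P : κ ⊕ π → Prop) :
    (∀ j : {j // P j}, Sum.elim α δ j) ≃
      (∀ i : {i // P (.inl i)}, α i) × (∀ k : {k // P (.inr k)}, δ k) where
  toFun F := (fun i => F ⟨.inl i, i.2⟩, fun k => F ⟨.inr k, k.2⟩)
  invFun G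
    | ⟨.inl i, hi⟩ => G.1 ⟨i, hi⟩
    | ⟨.inr k, hk⟩ => G.2 ⟨k, hk⟩
  left_inv F := by
    funext ⟨j, hj⟩
    cases j <;> rfl
  right_inv _ := rfl

lemma mergeSum_eq_sumPiEquivProdPi_symm {δ : π → Type} (f : ∀ i, α i) (h : ∀ k, δ k) :
    mergeSum f h = (Equiv.sumPiEquivProdPi (Sum.elim α δ)).symm (f, h) := by
  funext j
  cases j <;> rfl

end SumPi

section Purification

variable {κ π : Type} [Fintype κ] [Fintype π] [DecidableEq π] {α : κ → Type} [∀ i, Fintype (α i)]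

lemma trace_vecState_of_purifies [DecidableEq κ] {d : π → ℕ}
    {ψ : (∀ j : κ ⊕ π, Sum.elim α (fun k => Fin (d k)) j) → ℂ}
    {ρ : Matrix (∀ i, α i) (∀ i, α i) ℂ} (hψ : Purifies ψ ρ) :
    (vecState ψ).trace = ρ.trace := by
  rw [trace, trace, ← (Equiv.sumPiEquivProdPi _).symm.sum_comp, Fintype.sum_prod_type]
  refine Finset.sum_congr rfl fun f _ => Eq.trans ?_ (hψ f f)
  exact Finset.sum_congr rfl fun h _ =>
    congrArg (fun x => vecState ψ x x) (mergeSum_eq_sumPiEquivProdPi_symm f h).symm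

def purificationVector (k₀ : π) {d : π → ℕ} (W : Matrix (∀ i, α i) (Fin (d k₀)) ℂ) :
    (∀ j : κ ⊕ π, Sum.elim α (fun k => Fin (d k)) j) → ℂ :=
  fun x => W (fun i => x (.inl i)) (x (.inr k₀))

variable {k₀ : π} {d : π → ℕ}

lemma purifies_purificationVector (hd : ∀ k ≠ k₀, d k = 1)
    (W : Matrix (∀ i, α i) (Fin (d k₀)) ℂ) : Purifies (purificationVector k₀ W) (W * Wᴴ) :=
  fun f g => Fintype.sum_equiv (piFinEquivOfEqOne k₀ hd) _ (fun j => W f j * star (W g j))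
    fun _ => rfl

lemma matEntropy_reduce_purificationVector [DecidableEq κ] [∀ i, DecidableEq (α i)]
    (hd : ∀ k ≠ k₀, d k = 1) (W : Matrix (∀ i, α i) (Fin (d k₀)) ℂ)
    {T : Finset (κ ⊕ π)} {s : Finset κ}
    (hs : ∀ i, .inl i ∈ T ↔ i ∈ s) (hk₀ : .inr k₀ ∉ T) :
    matEntropy (reduce T (vecState (purificationVector k₀ W))) =
      matEntropy (reduce s (W * Wᴴ)) := by
  -- The ancillas in `T` are one-dimensional, so up to relabelling rows and columns the
  -- coefficient matrix of `ψ` for the cut `T` is that of `W` for the cut `s`.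
  have hT : ∀ k : {k // .inr k ∈ T}, d k = 1 := fun k => hd k fun h => hk₀ (h ▸ k.2)
  let eIn : (∀ j : {j // j ∈ T}, Sum.elim α (fun k => Fin (d k)) j) ≃
      (∀ i : {i // i ∈ s}, α i) :=
    (piSubtypeSumEquiv _).trans <|
      ((piSubtypeCongr hs).prodCongr (Equiv.piCongrRight fun k => finCongr (hT k))).trans
        (Equiv.prodUnique _ _)
  let eOut : (∀ j : {j // j ∉ T}, Sum.elim α (fun k => Fin (d k)) j) ≃
      (∀ i : {i // i ∉ s}, α i) × Fin (d k₀) :=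
    (piSubtypeSumEquiv _).trans <| (piSubtypeCongr fun i => not_congr (hs i)).prodCongr
      (piFinEquivOfEqOne (d := fun k : {k // .inr k ∉ T} => d k) ⟨k₀, hk₀⟩
        fun k hk => hd k fun h => hk (Subtype.ext h))
  have hcoeff : coeffMatrix T (purificationVector k₀ W) =
      (of fun f (hj : (∀ i : {j // j ∉ s}, α i) × Fin (d k₀)) =>
        W ((Equiv.piEquivPiSubtypeProd (· ∈ s) α).symm (f, hj.1)) hj.2).submatrix eIn eOut := by
    ext F H
    simp only [coeffMatrix, purificationVector, of_apply, submatrix_apply]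
    congr 1
    · funext i
      by_cases hi : i ∈ s
      · simp only [Equiv.piEquivPiSubtypeProd, Equiv.coe_fn_symm_mk, dif_pos hi,
          dif_pos ((hs i).2 hi)]
        rfl
      · simp only [Equiv.piEquivPiSubtypeProd, Equiv.coe_fn_symm_mk, dif_neg hi,
          dif_neg (mt (hs i).1 hi)]
        rfl
    · exact dif_neg hk₀
  rw [reduce_vecState, reduce_mul_conjTranspose, hcoeff, matEntropy_submatrix_mul_conjTranspose]

end Purification

lemma Matrix.PosSemidef.exists_eq_mul_conjTranspose_fin {X : Type} [Fintype X] [DecidableEq X]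
    {ρ : Matrix X X ℂ} (hρ : ρ.PosSemidef) {n : ℕ} (hn : Fintype.card X = n) :
    ∃ W : Matrix X (Fin n) ℂ, ρ = W * Wᴴ := by
  let e : Fin n ≃ X := (finCongr hn.symm).trans (Fintype.equivFin X).symm
  refine ⟨(CFC.sqrt ρ).submatrix id e, ?_⟩
  rw [conjTranspose_submatrix, submatrix_mul_equiv, submatrix_id_id,
    (CFC.sqrt_nonneg ρ).posSemidef.1.eq, CFC.sqrt_mul_sqrt_self ρ hρ.nonneg]

section DeltaPart

variable {κ π : Type} [Fintype κ] [DecidableEq κ] [Fintype π] [DecidableEq π]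
  {α : κ → Type} [∀ i, Fintype (α i)] [∀ i, DecidableEq (α i)]
  {ρ : Matrix (∀ i, α i) (∀ i, α i) ℂ}

lemma DeltaPart_le_of_purifies (hρ : ρ.trace = 1) (p : κ → π) {d : π → ℕ}
    {ψ : (∀ j : κ ⊕ π, Sum.elim α (fun k => Fin (d k)) j) → ℂ} (hψ : Purifies ψ ρ) :
    DeltaPart p ρ ≤ ∑ k, matEntropy (reduce (partyFinset p k) (vecState ψ)) := by
  refine csInf_le ⟨0, ?_⟩ ⟨d, ψ, hψ, rfl⟩
  rintro _ ⟨d', ψ', hψ', rfl⟩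
  exact Finset.sum_nonneg fun k _ =>
    matEntropy_reduce_vecState_nonneg _ ((trace_vecState_of_purifies hψ').trans hρ)

theorem DeltaPart_le_sum_marginal_entropies (hρ : IsDensityMatrix ρ) (p : κ → π) (k₀ : π) :
    DeltaPart p ρ ≤ matEntropy (reduce (Finset.univ.filter (p · ≠ k₀)) ρ) +
      ∑ k ∈ Finset.univ.erase k₀, matEntropy (reduce (Finset.univ.filter (p · = k)) ρ) := by
  set d : π → ℕ := Function.update 1 k₀ (Fintype.card (∀ i, α i))
  have hd : ∀ k ≠ k₀, d k = 1 := fun k hk => Function.update_of_ne hk _ _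
  obtain ⟨W, hW⟩ := hρ.1.exists_eq_mul_conjTranspose_fin (n := d k₀) (by simp [d])
  subst hW
  refine (DeltaPart_le_of_purifies hρ.2 p (purifies_purificationVector hd W)).trans_eq ?_
  rw [← Finset.add_sum_erase _ _ (Finset.mem_univ k₀), ← matEntropy_reduce_compl_vecState]
  refine congrArg₂ (· + ·) ?_ (Finset.sum_congr rfl fun k hk => ?_)
  · exact matEntropy_reduce_purificationVector hd W (by simp [partyFinset])
      (by simp [partyFinset])
  · refine matEntropy_reduce_purificationVector hd W (by simp [partyFinset]) ?_
    simpa [partyFinset] using (Finset.ne_of_mem_erase hk).symm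

end DeltaPart

lemma DeltaPart_id_fin_three_le {α : Fin 3 → Type}
    [∀ i, Fintype (α i)] [∀ i, DecidableEq (α i)]
    {ρ : Matrix (∀ i, α i) (∀ i, α i) ℂ} (hρ : IsDensityMatrix ρ) {i j k : Fin 3}
    (hij : i ≠ j) (hik : i ≠ k) (hjk : j ≠ k) :
    DeltaPart id ρ ≤ matEntropy (reduce {i} ρ) + matEntropy (reduce {j} ρ)
      + matEntropy (reduce ({i, j} : Finset (Fin 3)) ρ) := by
  have hpair : Finset.univ.erase k = {i, j} := by
    revert i j k; decide
  have hcompl : Finset.univ.filter (id · ≠ k) = {i, j} := by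
    revert i j k; decide
  have hsingle (m : Fin 3) : Finset.univ.filter (id · = m) = {m} := by
    ext; simp
  have h := DeltaPart_le_sum_marginal_entropies hρ id k
  rw [hcompl, hpair, Finset.sum_pair hij, hsingle, hsingle] at h
  linarith

/-- upper bound for the tripartite entanglement of purification:
`Δ_P(A:B:C) ≤ S_A + S_B + S_{AB}`, hence `Δ_P` is at most the minimum over the
three cyclic permutations.  Subsystems `A, B, C` are indexed by `0, 1, 2 : Fin 3`. -/
theorem DeltaP_tripartite_upper_bound {α : Fin 3 → Type}
    [∀ i, Fintype (α i)] [∀ i, DecidableEq (α i)]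
    (ρ : Matrix (∀ i, α i) (∀ i, α i) ℂ) (hρ : IsDensityMatrix ρ) :
    DeltaPart id ρ ≤ matEntropy (reduce {0} ρ) + matEntropy (reduce {1} ρ)
        + matEntropy (reduce ({0, 1} : Finset (Fin 3)) ρ) ∧
    DeltaPart id ρ ≤ min (matEntropy (reduce {0} ρ) + matEntropy (reduce {1} ρ)
          + matEntropy (reduce ({0, 1} : Finset (Fin 3)) ρ))
        (min (matEntropy (reduce {1} ρ) + matEntropy (reduce {2} ρ)
            + matEntropy (reduce ({1, 2} : Finset (Fin 3)) ρ))
          (matEntropy (reduce {2} ρ) + matEntropy (reduce {0} ρ)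
            + matEntropy (reduce ({2, 0} : Finset (Fin 3)) ρ))) := by
  have hAB := DeltaPart_id_fin_three_le hρ (i := 0) (j := 1) (k := 2) (by decide) (by decide)
    (by decide)
  have hBC := DeltaPart_id_fin_three_le hρ (i := 1) (j := 2) (k := 0) (by decide) (by decide)
    (by decide)
  have hCA := DeltaPart_id_fin_three_le hρ (i := 2) (j := 0) (k := 1) (by decide) (by decide)
    (by decide)
  exact ⟨hAB, le_min hAB (le_min hBC hCA)⟩
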